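/- (Deterministic form of Lemma 3.5.) Let N ∈ ℕ, M = 2^{N+1}, and let Λ_N = {(−1,0)} ∪ {(n,k) : 0 ≤ n ≤ N, 0 ≤ k < 2^n}. Define the linear map w : ℝ^{Λ_N} → ℝ^M by w_ℓ(z) = Σ_{(n,k)∈Λ_N} z_{n,k} · Δ^N_ℓ Ψ_{n,k} for ℓ = 0, …, M−1, where Ψ_{−1,0} := Ψ_{−1}. Let F : ℝ^M → ℝ be twice differentiable and set G = F ∘ w. If z ∈ ℝ^{Λ_N} and c ≥ 0 are such that all second-order partial derivatives satisfy |∂²F/∂w_ℓ ∂w_j (w(z))| ≤ c for all ℓ, j, then for every 0 ≤ n ≤ N and 0 ≤ k < 2^n the mixed second partial derivative with respect to the coordinate z_{−1,0} and z_{n,k} satisfies |∂²G/∂z_{−1,0} ∂z_{n,k}(z)| ≤ c · 2^{−n/2 + 1}. -/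

import Mathlib

/-!
By the chain rule, the mixed partial of `G = F ∘ w` is `D²F(w z) (w e_{n,k}) (w e_{-1,0})`. Since
all entries of `D²F(w z)` are bounded by `c`, it is at most `c ‖w e_{-1,0}‖₁ ‖w e_{n,k}‖₁`. The
vector `w e_i` is the sequence of increments of the antiderivative of `ψ_i` over the dyadic grid,
so its `ℓ¹` norm is at most `‖ψ_i‖_{L¹}`, which is `1` for `ψ_{-1}` and `2^{-n/2}` for `ψ_{n,k}`.
-/

open MeasureTheory

/-- The Haar mother wavelet. -/
noncomputable def haarMother (t : ℝ) : ℝ :=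
  if 0 ≤ t ∧ t < 1/2 then 1 else if 1/2 ≤ t ∧ t < 1 then -1 else 0

/-- The Haar function ψ_{n,k}. -/
noncomputable def haarFn (n k : ℕ) (t : ℝ) : ℝ :=
  (2:ℝ) ^ ((n : ℝ)/2) * haarMother ((2:ℝ)^n * t - k)

/-- The antiderivative Ψ_{n,k}(t) = ∫_0^t ψ_{n,k}(s) ds. -/
noncomputable def haarAnti (n k : ℕ) (t : ℝ) : ℝ := ∫ s in (0:ℝ)..t, haarFn n k s

/-- The function ψ_{-1} = 1_{[0,1]}. -/
noncomputable def haarNeg (t : ℝ) : ℝ := Set.indicator (Set.Icc (0:ℝ) 1) (fun _ => 1) t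

/-- The antiderivative Ψ_{-1}(t) = ∫_0^t ψ_{-1}(s) ds. -/
noncomputable def haarNegAnti (t : ℝ) : ℝ := ∫ s in (0:ℝ)..t, haarNeg s

/-- The dyadic grid point t^N_ℓ = ℓ / 2^{N+1}. -/
noncomputable def gridPt (N ℓ : ℕ) : ℝ := (ℓ : ℝ) / 2 ^ (N+1)

/-- The index set Λ_N = {(-1,0)} ∪ {(n,k) : 0 ≤ n ≤ N, 0 ≤ k < 2^n}; `none` encodes the
index (-1,0). -/
abbrev HaarIdx (N : ℕ) := Option ((n : Fin (N+1)) × Fin (2^(n:ℕ)))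

/-- The increment Δ^N_ℓ Ψ_i over the grid cell `[t^N_ℓ, t^N_{ℓ+1}]` for an index `i ∈ Λ_N`. -/
noncomputable def deltaPsi (N : ℕ) (i : HaarIdx N) (ℓ : Fin (2^(N+1))) : ℝ :=
  match i with
  | none => haarNegAnti (gridPt N ((ℓ : ℕ)+1)) - haarNegAnti (gridPt N (ℓ : ℕ))
  | some ⟨n, k⟩ => haarAnti n k (gridPt N ((ℓ : ℕ)+1)) - haarAnti n k (gridPt N (ℓ : ℕ))

/-- The linear map sending Haar coefficients to the vector of Brownian-path increments:
`w_ℓ(z) = Σ_{(n,k) ∈ Λ_N} z_{n,k} Δ^N_ℓ Ψ_{n,k}`. -/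
noncomputable def wMap (N : ℕ) (z : HaarIdx N → ℝ) : Fin (2^(N+1)) → ℝ :=
  fun ℓ => ∑ i : HaarIdx N, z i * deltaPsi N i ℓ

open Set

lemma measurable_haarMother : Measurable haarMother :=
  Measurable.ite measurableSet_Ico measurable_const
    (Measurable.ite measurableSet_Ico measurable_const measurable_const)

lemma abs_haarMother (t : ℝ) : |haarMother t| = (Ico (0 : ℝ) 1).indicator 1 t := by
  unfold haarMother
  simp only [indicator_apply, mem_Ico, Pi.one_apply]
  split_ifs <;> grind

lemma integrable_abs_haarMother : Integrable fun t => |haarMother t| := by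
  simp_rw [abs_haarMother]
  exact (integrable_indicator_iff measurableSet_Ico).2 (integrableOn_const measure_Ico_lt_top.ne)

lemma integrable_haarMother : Integrable haarMother :=
  (integrable_norm_iff measurable_haarMother.aestronglyMeasurable).1 integrable_abs_haarMother

lemma integral_abs_haarMother : ∫ t, |haarMother t| = 1 := by
  simp_rw [abs_haarMother]
  rw [integral_indicator_one measurableSet_Ico, Real.volume_real_Ico]
  norm_num

lemma integrable_haarFn (n k : ℕ) : Integrable (haarFn n k) :=
  ((integrable_haarMother.comp_sub_right (k : ℝ)).comp_mul_left' (by positivity)).const_mul _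

lemma integral_abs_haarFn (n k : ℕ) : ∫ t, |haarFn n k t| = (2 : ℝ) ^ (-(n : ℝ) / 2) := by
  simp only [haarFn, abs_mul, abs_of_pos (by positivity : (0 : ℝ) < 2 ^ ((n : ℝ) / 2))]
  rw [integral_const_mul, Measure.integral_comp_mul_left (fun t => |haarMother (t - k)|),
    integral_sub_right_eq_self (fun t => |haarMother t|), integral_abs_haarMother, smul_eq_mul,
    mul_one, abs_of_pos (by positivity), ← Real.rpow_natCast, ← Real.rpow_neg (by norm_num),
    ← Real.rpow_add two_pos]
  ring_nf

lemma integrable_haarNeg : Integrable haarNeg :=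
  (integrable_indicator_iff measurableSet_Icc).2 (integrableOn_const measure_Icc_lt_top.ne)

lemma integral_abs_haarNeg : ∫ t, |haarNeg t| = 1 := by
  have : (fun t => |haarNeg t|) = (Icc (0 : ℝ) 1).indicator 1 := by
    ext t
    by_cases h : t ∈ Icc (0 : ℝ) 1 <;> simp [haarNeg, h]
  rw [this, integral_indicator_one measurableSet_Icc, Real.volume_real_Icc]
  norm_num

lemma monotone_gridPt (N : ℕ) : Monotone (gridPt N) := fun _ _ h => by
  unfold gridPt
  gcongr

lemma sum_abs_intervalIntegral_le_integral_abs {f : ℝ → ℝ} (hf : Integrable f) {a : ℕ → ℝ}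
    (ha : Monotone a) (M : ℕ) :
    ∑ m ∈ Finset.range M, |∫ t in a m..a (m + 1), f t| ≤ ∫ t, |f t| :=
  calc ∑ m ∈ Finset.range M, |∫ t in a m..a (m + 1), f t|
      ≤ ∑ m ∈ Finset.range M, ∫ t in a m..a (m + 1), |f t| :=
        Finset.sum_le_sum fun m _ => intervalIntegral.abs_integral_le_integral_abs (ha m.le_succ)
    _ = ∫ t in a 0..a M, |f t| :=
        intervalIntegral.sum_integral_adjacent_intervals fun _ _ => hf.abs.intervalIntegrable
    _ ≤ ∫ t, |f t| := by
        rw [intervalIntegral.integral_of_le (ha M.zero_le)]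
        exact setIntegral_le_integral hf.abs (.of_forall fun t => abs_nonneg (f t))

lemma sum_abs_sub_integral_gridPt_le (N : ℕ) {f : ℝ → ℝ} (hf : Integrable f) :
    ∑ ℓ : Fin (2 ^ (N + 1)),
      |(∫ s in (0 : ℝ)..gridPt N (ℓ + 1), f s) - ∫ s in (0 : ℝ)..gridPt N ℓ, f s| ≤
      ∫ t, |f t| := by
  simp_rw [intervalIntegral.integral_interval_sub_left hf.intervalIntegrable hf.intervalIntegrable]
  rw [Fin.sum_univ_eq_sum_range (fun m => |∫ t in gridPt N m..gridPt N (m + 1), f t|)]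
  exact sum_abs_intervalIntegral_le_integral_abs hf (monotone_gridPt N) _

lemma sum_abs_deltaPsi_none_le (N : ℕ) : ∑ ℓ, |deltaPsi N none ℓ| ≤ 1 :=
  (sum_abs_sub_integral_gridPt_le N integrable_haarNeg).trans_eq integral_abs_haarNeg

lemma sum_abs_deltaPsi_some_le (N : ℕ) (n : Fin (N + 1)) (k : Fin (2 ^ (n : ℕ))) :
    ∑ ℓ, |deltaPsi N (some ⟨n, k⟩) ℓ| ≤ (2 : ℝ) ^ (-((n : ℕ) : ℝ) / 2) :=
  (sum_abs_sub_integral_gridPt_le N (integrable_haarFn n k)).trans_eq (integral_abs_haarFn n k)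

section FiniteCoordinates

variable {ι κ : Type*} [Fintype ι] [DecidableEq ι] [Fintype κ] [DecidableEq κ]

lemma ContinuousLinearMap.abs_apply_le_of_abs_apply_single_le (φ : (ι → ℝ) →L[ℝ] ℝ) {c : ℝ}
    (hφ : ∀ i, |φ (Pi.single i 1)| ≤ c) (v : ι → ℝ) : |φ v| ≤ c * ∑ i, |v i| := by
  have hv : φ v = ∑ i, v i * φ (Pi.single i 1) := by
    conv_lhs => rw [← Finset.univ_sum_single v]
    refine (map_sum φ _ _).trans (Finset.sum_congr rfl fun i _ => ?_)
    rw [← smul_eq_mul, ← map_smul, ← Pi.single_smul, smul_eq_mul, mul_one]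
  rw [hv, Finset.mul_sum]
  refine (Finset.abs_sum_le_sum_abs _ _).trans (Finset.sum_le_sum fun i _ => ?_)
  rw [abs_mul, mul_comm c]
  exact mul_le_mul_of_nonneg_left (hφ i) (abs_nonneg _)

lemma ContinuousLinearMap.abs_apply₂_le_of_abs_apply_single_le
    (B : (ι → ℝ) →L[ℝ] (κ → ℝ) →L[ℝ] ℝ) {c : ℝ}
    (hB : ∀ i j, |B (Pi.single i 1) (Pi.single j 1)| ≤ c) (v : ι → ℝ) (u : κ → ℝ) :
    |B v u| ≤ c * (∑ j, |u j|) * ∑ i, |v i| :=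
  (B.flip u).abs_apply_le_of_abs_apply_single_le
    (fun i => (B (Pi.single i 1)).abs_apply_le_of_abs_apply_single_le (hB i) u) v

end FiniteCoordinates

section SecondDerivative

variable {𝕜 E F G : Type*} [NontriviallyNormedField 𝕜] [NormedAddCommGroup E] [NormedSpace 𝕜 E]
  [NormedAddCommGroup F] [NormedSpace 𝕜 F] [NormedAddCommGroup G] [NormedSpace 𝕜 G]

lemma fderiv_fderiv_apply {f : E → F} {x : E} (hf : DifferentiableAt 𝕜 (fderiv 𝕜 f) x)
    (u v : E) : fderiv 𝕜 (fun y => fderiv 𝕜 f y u) x v = fderiv 𝕜 (fderiv 𝕜 f) x v u := by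
  rw [fderiv_clm_apply hf (differentiableAt_const u)]
  simp

lemma fderiv_fderiv_comp_clm_apply {f : F → G} (hf : ContDiff 𝕜 2 f) (L : E →L[𝕜] F)
    (x u v : E) :
    fderiv 𝕜 (fun y => fderiv 𝕜 (fun y' => f (L y')) y u) x v =
      fderiv 𝕜 (fderiv 𝕜 f) (L x) (L v) (L u) := by
  have hf' : Differentiable 𝕜 (fderiv 𝕜 f) :=
    (hf.fderiv_right (m := 1) (by norm_num)).differentiable (by norm_num)
  have h₁ : (fun y => fderiv 𝕜 (fun y' => f (L y')) y u) = fun y => fderiv 𝕜 f (L y) (L u) := by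
    ext y
    rw [show (fun y' => f (L y')) = f ∘ L from rfl,
      fderiv_comp y ((hf.differentiable (by norm_num)) _) L.differentiableAt, L.fderiv]
    rfl
  rw [h₁, show (fun y => fderiv 𝕜 f (L y) (L u)) = (fun w => fderiv 𝕜 f w (L u)) ∘ L from rfl,
    fderiv_comp x ((hf' _).clm_apply (differentiableAt_const _)) L.differentiableAt, L.fderiv,
    ContinuousLinearMap.comp_apply, fderiv_fderiv_apply (hf' _)]

end SecondDerivative

noncomputable def wMapCLM (N : ℕ) : (HaarIdx N → ℝ) →L[ℝ] (Fin (2 ^ (N + 1)) → ℝ) :=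
  ∑ i, (ContinuousLinearMap.proj i).smulRight (deltaPsi N i)

@[simp]
lemma coe_wMapCLM (N : ℕ) : ⇑(wMapCLM N) = wMap N := by
  ext z ℓ
  simp [wMapCLM, wMap]

lemma wMap_single (N : ℕ) (i : HaarIdx N) : wMap N (Pi.single i 1) = deltaPsi N i := by
  ext ℓ
  simp [wMap, Pi.single_apply]

/-- deterministic form of Lemma 3.5: if all second-order partial derivatives
of `F` at `w(z)` are bounded by `c`, then the mixed second partial derivative of
`G = F ∘ w` with respect to the coordinates `z_{-1,0}` and `z_{n,k}` is bounded by
`c · 2^{-n/2 + 1}`. -/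
theorem abs_fderiv2_comp_wMap_le (N : ℕ) (F : (Fin (2^(N+1)) → ℝ) → ℝ)
    (hF : ContDiff ℝ 2 F) (z : HaarIdx N → ℝ) (c : ℝ) (hc : 0 ≤ c)
    (hbound : ∀ ℓ j : Fin (2^(N+1)),
      |fderiv ℝ (fun x => fderiv ℝ F x (Pi.single ℓ 1)) (wMap N z) (Pi.single j 1)| ≤ c)
    (n : Fin (N+1)) (k : Fin (2^(n:ℕ))) :
    |fderiv ℝ
        (fun z' => fderiv ℝ (fun z'' => F (wMap N z'')) z' (Pi.single (none : HaarIdx N) 1))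
        z (Pi.single (some ⟨n, k⟩ : HaarIdx N) 1)| ≤
      c * (2:ℝ) ^ (-((n:ℕ) : ℝ)/2 + 1) := by
  have hF' : Differentiable ℝ (fderiv ℝ F) :=
    (hF.fderiv_right (m := 1) (by norm_num)).differentiable (by norm_num)
  simp_rw [fderiv_fderiv_apply (hF' _)] at hbound
  have hchain := fderiv_fderiv_comp_clm_apply hF (wMapCLM N) z (Pi.single none 1)
    (Pi.single (some ⟨n, k⟩) 1)
  simp only [coe_wMapCLM, wMap_single] at hchain
  rw [hchain]
  calc _ ≤ c * (∑ ℓ, |deltaPsi N none ℓ|) * ∑ ℓ, |deltaPsi N (some ⟨n, k⟩) ℓ| :=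
        ContinuousLinearMap.abs_apply₂_le_of_abs_apply_single_le _ (fun ℓ j => hbound j ℓ) _ _
    _ ≤ c * 1 * (2 : ℝ) ^ (-((n : ℕ) : ℝ) / 2) := by
        gcongr
        exacts [sum_abs_deltaPsi_none_le N, sum_abs_deltaPsi_some_le N n k]
    _ ≤ c * (2 : ℝ) ^ (-((n : ℕ) : ℝ) / 2 + 1) := by
        rw [mul_one]
        gcongr
        · norm_num
        · linarith
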